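/- arXiv:2409.08869 — 7 statements merged into one kernel-verified Lean document; each statement's English description precedes it below -/
import Mathlib

section
/- For every real ω with 1 ≤ ω ≤ π/2, one has cos(√(ω² − 1)) ≤ 1/ω. -/
open Real

theorem cos_sqrt_le_inv (ω : ℝ) (hω1 : 1 ≤ ω) (hω2 : ω ≤ π / 2) :
    Real.cos (Real.sqrt (ω ^ 2 - 1)) ≤ 1 / ω := by
  have hx : (0:ℝ) ≤ ω ^ 2 - 1 := by nlinarith
  have hb := Real.cos_le_one_div_sqrt_sq_add_one
    (x := Real.sqrt (ω ^ 2 - 1))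
    (by nlinarith [Real.sqrt_nonneg (ω ^ 2 - 1), Real.pi_pos])
    (by
      have := Real.sqrt_le_sqrt (show ω ^ 2 - 1 ≤ (3 * π / 2) ^ 2 by nlinarith [Real.pi_gt_three])
      calc Real.sqrt (ω ^ 2 - 1) ≤ Real.sqrt ((3 * π / 2) ^ 2) := this
        _ = 3 * π / 2 := Real.sqrt_sq (by positivity))
  have hs : Real.sqrt (ω ^ 2 - 1) ^ 2 + 1 = ω ^ 2 := by
    rw [Real.sq_sqrt hx]; ring
  rw [hs, Real.sqrt_sq (by linarith)] at hb
  exact hb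
end

section
/- For every real ω with 1 ≤ ω ≤ π/2, one has π − 2·√(ω² − 1) ≤ 2·arcsin(1/ω). -/
open Real

theorem pi_sub_two_sqrt_le (ω : ℝ) (hω1 : 1 ≤ ω) (hω2 : ω ≤ π / 2) :
    π - 2 * Real.sqrt (ω ^ 2 - 1) ≤ 2 * Real.arcsin (1 / ω) := by
  have hω0 : 0 < ω := lt_of_lt_of_le one_pos hω1
  have h1 : 1 / ω ≤ 1 := by rw [div_le_one hω0]; exact hω1
  have h0 : 0 < 1 / ω := by positivity
  set θ := Real.arccos (1 / ω) with hθdef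
  have hθcos : Real.cos θ = 1 / ω := Real.cos_arccos (by linarith) h1
  have hθ0 : 0 ≤ θ := Real.arccos_nonneg _
  have hasin : Real.arcsin (1 / ω) = π / 2 - θ := by
    rw [hθdef, Real.arccos]; ring
  have hasinpos : 0 < Real.arcsin (1 / ω) := Real.arcsin_pos.2 h0
  have hθlt : θ < π / 2 := by linarith
  have htan : Real.tan θ = Real.sqrt (ω ^ 2 - 1) := by
    rw [Real.tan_eq_sin_div_cos, hθcos, Real.sin_arccos]
    rw [div_div_eq_mul_div, div_one]
    have hnn : 0 ≤ 1 - (1 / ω) ^ 2 := by nlinarith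
    rw [show Real.sqrt (1 - (1 / ω) ^ 2) * ω
        = Real.sqrt ((1 - (1 / ω) ^ 2) * ω ^ 2) by
      rw [Real.sqrt_mul hnn, Real.sqrt_sq hω0.le]]
    congr 1
    field_simp
  have key : θ ≤ Real.sqrt (ω ^ 2 - 1) := by
    rcases eq_or_lt_of_le hθ0 with h | h
    · rw [← h]; exact Real.sqrt_nonneg _
    · rw [← htan]; exact (Real.lt_tan h hθlt).le
  linarith
end

section
/- For every real ω with 1 < ω ≤ π/2 and all reals θ, γ with 0 ≤ θ ≤ γ ≤ π/2, one has min(2·ω·cos θ, π − 2θ) ≤ 2·(ω·cos γ + γ − θ). -/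
/-
The bending length `γ ↦ ω cos γ + γ` is concave on `[-π/2, π/2]`, so on `[θ, π/2]` it is bounded
below by its smaller endpoint value: `ω cos θ + θ` (the chord) or `π/2` (the arc).
-/

open Real Set

theorem concaveOn_mul_cos_add_id {ω : ℝ} (hω : 0 ≤ ω) :
    ConcaveOn ℝ (Icc (-(π / 2)) (π / 2)) fun x => ω * cos x + x :=
  (strictConcaveOn_cos_Icc.concaveOn.smul hω).add (concaveOn_id (convex_Icc _ _))

theorem min_le_mul_cos_add_self {ω θ γ : ℝ} (hω : 0 ≤ ω) (hθ : -(π / 2) ≤ θ) (hθγ : θ ≤ γ)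
    (hγ : γ ≤ π / 2) : min (ω * cos θ + θ) (π / 2) ≤ ω * cos γ + γ := by
  have hπ : 0 ≤ π := pi_pos.le
  simpa [cos_pi_div_two] using (concaveOn_mul_cos_add_id hω).min_le_of_mem_Icc
    ⟨hθ, hθγ.trans hγ⟩ ⟨by linarith, le_rfl⟩ ⟨hθγ, hγ⟩

theorem min_chord_arc_le_bending_general (ω θ γ : ℝ) (hω1 : 1 < ω)
    (hθ0 : 0 ≤ θ) (hθγ : θ ≤ γ) (hγ : γ ≤ π / 2) :
    min (2 * ω * Real.cos θ) (π - 2 * θ) ≤ 2 * (ω * Real.cos γ + γ - θ) := by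
  have hθ : -(π / 2) ≤ θ := by linarith [pi_pos]
  have hbend := min_le_mul_cos_add_self (ω := ω) (by linarith) hθ hθγ hγ
  rcases min_le_iff.mp hbend with hchord | harc
  · exact min_le_of_left_le (by linarith)
  · exact min_le_of_right_le (by linarith)

theorem min_chord_arc_le_bending (ω θ γ : ℝ) (hω1 : 1 < ω) (hω2 : ω ≤ π / 2)
    (hθ0 : 0 ≤ θ) (hθγ : θ ≤ γ) (hγ : γ ≤ π / 2) :
    min (2 * ω * Real.cos θ) (π - 2 * θ) ≤ 2 * (ω * Real.cos γ + γ - θ) :=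
  min_chord_arc_le_bending_general ω θ γ hω1 hθ0 hθγ hγ
end

section
/- For every real L ≥ 1 and every real φ with φ ≤ arccos(1/L), one has φ − √(1 + L² − 2·L·cos φ) ≤ arccos(1/L) − √(L² − 1). -/
open Real

set_option maxHeartbeats 1000000 in
theorem sub_sqrt_le_arccos (L φ : ℝ) (hL : 1 ≤ L) (hφ : φ ≤ Real.arccos (1 / L)) :
    φ - Real.sqrt (1 + L ^ 2 - 2 * L * Real.cos φ) ≤
      Real.arccos (1 / L) - Real.sqrt (L ^ 2 - 1) := by
  have hL0 : (0:ℝ) < L := lt_of_lt_of_le one_pos hL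
  set A := Real.arccos (1 / L) with hA
  have hinv1 : 1 / L ≤ 1 := by
    rw [div_le_one hL0]; exact hL
  have hinv0 : 0 < 1 / L := by positivity
  have hcosA : Real.cos A = 1 / L := Real.cos_arccos (by linarith) hinv1
  have hsinA : 0 ≤ Real.sin A :=
    Real.sin_nonneg_of_nonneg_of_le_pi (Real.arccos_nonneg _) (Real.arccos_le_pi _)
  have hpyA : Real.sin A ^ 2 + Real.cos A ^ 2 = 1 := Real.sin_sq_add_cos_sq A
  have hpyφ : Real.sin φ ^ 2 + Real.cos φ ^ 2 = 1 := Real.sin_sq_add_cos_sq φ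
  set c := A - φ with hc
  have hc0 : 0 ≤ c := by simp only [hc]; linarith
  have hcosc : Real.cos c = Real.cos A * Real.cos φ + Real.sin A * Real.sin φ := Real.cos_sub A φ
  have hd2 : 0 ≤ 1 + L ^ 2 - 2 * L * Real.cos φ := by nlinarith [Real.cos_le_one φ]
  set d := Real.sqrt (1 + L ^ 2 - 2 * L * Real.cos φ) with hdd
  have hd : d ^ 2 = 1 + L ^ 2 - 2 * L * Real.cos φ := Real.sq_sqrt hd2
  have hdnn : 0 ≤ d := Real.sqrt_nonneg _
  have hs2 : 0 ≤ 2 - 2 * Real.cos c := by nlinarith [Real.cos_le_one c]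
  set s := Real.sqrt (2 - 2 * Real.cos c) with hss
  have hs : s ^ 2 = 2 - 2 * Real.cos c := Real.sq_sqrt hs2
  have hsnn : 0 ≤ s := Real.sqrt_nonneg _
  clear_value d s
  have hsc : s ≤ c := by
    have h1 : 2 - 2 * Real.cos c ≤ c ^ 2 := by nlinarith [Real.one_sub_sq_div_two_le_cos (x := c)]
    calc s ≤ Real.sqrt (c ^ 2) := by rw [hss]; exact Real.sqrt_le_sqrt h1
      _ = c := by rw [Real.sqrt_sq hc0]
  have hLca : L * Real.cos A = 1 := by rw [hcosA]; field_simp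
  have e3 : (L - Real.cos φ) * (Real.cos A - Real.cos φ) - Real.sin φ * (Real.sin A - Real.sin φ)
      = 2 - (L * Real.cos φ + Real.cos c) := by
    linear_combination hLca + hpyφ + hcosc
  have lag : ((L - Real.cos φ) ^ 2 + Real.sin φ ^ 2) * ((Real.cos A - Real.cos φ) ^ 2 + (Real.sin A - Real.sin φ) ^ 2)
      = ((L - Real.cos φ) * (Real.cos A - Real.cos φ) - Real.sin φ * (Real.sin A - Real.sin φ)) ^ 2
        + ((L - Real.cos φ) * (Real.sin A - Real.sin φ) + Real.sin φ * (Real.cos A - Real.cos φ)) ^ 2 := by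
    ring
  have e1 : (L - Real.cos φ) ^ 2 + Real.sin φ ^ 2 = d ^ 2 := by
    rw [hd]; linear_combination hpyφ
  have e2 : (Real.cos A - Real.cos φ) ^ 2 + (Real.sin A - Real.sin φ) ^ 2 = s ^ 2 := by
    rw [hs, hcosc]; linear_combination hpyA + hpyφ
  have hcs : (2 - (L * Real.cos φ + Real.cos c)) ^ 2 ≤ (d * s) ^ 2 := by
    rw [e1, e2, e3] at lag
    calc (2 - (L * Real.cos φ + Real.cos c)) ^ 2
        ≤ (2 - (L * Real.cos φ + Real.cos c)) ^ 2
          + ((L - Real.cos φ) * (Real.sin A - Real.sin φ)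
            + Real.sin φ * (Real.cos A - Real.cos φ)) ^ 2 := le_add_of_nonneg_right (sq_nonneg _)
      _ = d ^ 2 * s ^ 2 := lag.symm
      _ = (d * s) ^ 2 := (mul_pow d s 2).symm
  have hds : L * Real.cos φ + Real.cos c - 2 ≤ d * s := by
    have h2 : |2 - (L * Real.cos φ + Real.cos c)| ≤ d * s := by
      rw [← Real.sqrt_sq (mul_nonneg hdnn hsnn), ← Real.sqrt_sq_eq_abs]
      exact Real.sqrt_le_sqrt hcs
    linarith [neg_abs_le (2 - (L * Real.cos φ + Real.cos c))]
  set t := Real.sqrt (L ^ 2 - 1) with htt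
  have ht2 : t ^ 2 = L ^ 2 - 1 := Real.sq_sqrt (by nlinarith)
  have htnn : 0 ≤ t := Real.sqrt_nonneg _
  clear_value t
  have ht : t ≤ d + s := by
    have h1 : L ^ 2 - 1 ≤ (d + s) ^ 2 := by
      have hexp : (d + s) ^ 2 = d ^ 2 + 2 * (d * s) + s ^ 2 := by ring
      linarith [hd, hs, hds, hexp]
    calc t ≤ Real.sqrt ((d + s) ^ 2) := by rw [htt]; exact Real.sqrt_le_sqrt h1
      _ = d + s := Real.sqrt_sq (by positivity)
  linarith
end

section
/- Let a ≥ 1, d > 0 and ε ∈ (0, 1] be reals, let L ≥ d + 1, and let ε' be a real with 0 ≤ ε' ≤ ε·d/(2·a·(d+1)). Then 1 + L² − 2·L·cos(2·ε') ≤ (1 + ε/a)²·(L − 1)². -/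
open Real

theorem zero_weight_case (a d ε L ε' : ℝ) (ha : 1 ≤ a) (hd : 0 < d)
    (hε0 : 0 < ε) (hε1 : ε ≤ 1) (hL : d + 1 ≤ L)
    (hε'0 : 0 ≤ ε') (hε' : ε' ≤ ε * d / (2 * a * (d + 1))) :
    1 + L ^ 2 - 2 * L * Real.cos (2 * ε') ≤ (1 + ε / a) ^ 2 * (L - 1) ^ 2 := by
  have hcos : 1 - (2 * ε') ^ 2 / 2 ≤ Real.cos (2 * ε') :=
    Real.one_sub_sq_div_two_le_cos
  have hL1 : (1:ℝ) < L := by linarith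
  have ha0 : (0:ℝ) < a := by linarith
  have hL0 : (0:ℝ) ≤ L := by linarith
  -- step 1: LHS ≤ (L-1)^2 + 4 L ε'^2
  have h1 : 1 + L ^ 2 - 2 * L * Real.cos (2 * ε') ≤ (L - 1) ^ 2 + 4 * L * ε' ^ 2 := by
    nlinarith [mul_le_mul_of_nonneg_left hcos (by linarith : (0:ℝ) ≤ 2 * L)]
  -- step 2: ε'^2 bound, division-free
  have hε'2 : ε' ^ 2 ≤ (ε * d / (2 * a * (d + 1))) ^ 2 :=
    pow_le_pow_left₀ hε'0 hε' 2
  have hε'3 : ε' ^ 2 * (4 * a ^ 2 * (d + 1) ^ 2) ≤ ε ^ 2 * d ^ 2 := by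
    have hs : (ε * d / (2 * a * (d + 1))) ^ 2 = ε ^ 2 * d ^ 2 / (4 * a ^ 2 * (d + 1) ^ 2) := by
      field_simp; ring
    rw [hs, le_div_iff₀ (by positivity)] at hε'2
    exact hε'2
  -- key: L * d^2 ≤ (d+1) * (L-1)^2
  have hkey : L * d ^ 2 ≤ (d + 1) * (L - 1) ^ 2 := by nlinarith [sq_nonneg (L - d - 1)]
  have hεa : ε ≤ a := hε1.trans ha
  have h2m : (4 * L * ε' ^ 2 * a) * (a * (d + 1) ^ 2) ≤ (2 * ε * (L - 1) ^ 2) * (a * (d + 1) ^ 2) := by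
    nlinarith [mul_le_mul_of_nonneg_left hε'3 hL0,
      mul_le_mul_of_nonneg_left hεa (by positivity : (0:ℝ) ≤ ε * L * d ^ 2),
      mul_le_mul_of_nonneg_left hkey (by positivity : (0:ℝ) ≤ ε * a),
      mul_nonneg (mul_nonneg (mul_nonneg (mul_nonneg hε0.le ha0.le) (sq_nonneg (L-1))) hd.le) hd.le,
      mul_nonneg (mul_nonneg (mul_nonneg (mul_nonneg hε0.le ha0.le) (sq_nonneg (L-1))) hd.le) (by norm_num : (0:ℝ) ≤ 3)]
  have h2' : 4 * L * ε' ^ 2 * a ≤ 2 * ε * (L - 1) ^ 2 :=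
    le_of_mul_le_mul_right h2m (by positivity)
  have h2 : 4 * L * ε' ^ 2 ≤ 2 * (ε / a) * (L - 1) ^ 2 := by
    rw [show 2 * (ε / a) * (L - 1) ^ 2 = 2 * ε * (L - 1) ^ 2 / a by ring, le_div_iff₀ ha0]
    linarith
  have hfin : (L - 1) ^ 2 + 2 * (ε / a) * (L - 1) ^ 2 ≤ (1 + ε / a) ^ 2 * (L - 1) ^ 2 := by
    nlinarith [sq_nonneg (ε / a * (L - 1))]
  linarith
end

section
/- For every real x with 0 < x < √2, one has sin x ≤ (2/(2 − x²))·x·cos x (equivalently, tan x/x ≤ 2/(2 − x²)). -/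
/-! Clearing the denominator, the claim says that `2 t cos t - (2 - t²) sin t` is nonnegative; it
vanishes at `0` and its derivative `t² cos t` is nonnegative up to `π / 2 > √2`. -/

open Real Set

theorem hasDerivAt_two_mul_mul_cos_sub_mul_sin (t : ℝ) :
    HasDerivAt (fun t => 2 * t * cos t - (2 - t ^ 2) * sin t) (t ^ 2 * cos t) t := by
  have hcos := ((hasDerivAt_id t).const_mul 2).mul (hasDerivAt_cos t)
  have hsin := ((hasDerivAt_pow 2 t).const_sub 2).mul (hasDerivAt_sin t)
  refine (hcos.sub hsin).congr_deriv ?_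
  simp only [id, Nat.cast_ofNat]
  ring

theorem two_sub_sq_mul_sin_le {x : ℝ} (hx0 : 0 ≤ x) (hx : x ≤ π / 2) :
    (2 - x ^ 2) * sin x ≤ 2 * x * cos x := by
  set f : ℝ → ℝ := fun t => 2 * t * cos t - (2 - t ^ 2) * sin t
  have hmono : MonotoneOn f (Icc 0 (π / 2)) := by
    refine monotoneOn_of_hasDerivWithinAt_nonneg (convex_Icc _ _)
      (by fun_prop) (fun t _ => (hasDerivAt_two_mul_mul_cos_sub_mul_sin t).hasDerivWithinAt) ?_
    intro t ht
    rw [interior_Icc] at ht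
    have : 0 ≤ cos t := cos_nonneg_of_mem_Icc ⟨by linarith [pi_pos, ht.1], ht.2.le⟩
    positivity
  have h := hmono ⟨le_rfl, by positivity⟩ ⟨hx0, hx⟩ hx0
  simp only [f, mul_zero, zero_mul, sin_zero, sub_zero] at h
  linarith

theorem sqrt_two_lt_pi_div_two : √2 < π / 2 := by
  rw [sqrt_lt' (by positivity)]
  nlinarith [pi_gt_three]

theorem sin_le_ratio (x : ℝ) (hx0 : 0 < x) (hx : x < Real.sqrt 2) :
    Real.sin x ≤ (2 / (2 - x ^ 2)) * x * Real.cos x := by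
  have hsq : 0 < 2 - x ^ 2 := by
    rw [lt_sqrt hx0.le] at hx
    linarith
  have hkey := two_sub_sq_mul_sin_le hx0.le (hx.trans sqrt_two_lt_pi_div_two).le
  rw [div_mul_eq_mul_div, div_mul_eq_mul_div, le_div_iff₀ hsq]
  linarith
end

section
/- Let ε ∈ (0, 1] and let c be a real with c ≥ π·√((1+ε)/(2ε)). Then sin(π/c) ≤ (1 + ε)·(π/c)·cos(π/c). -/
open Real

theorem cgon_threshold (ε c : ℝ) (hε0 : 0 < ε) (hε1 : ε ≤ 1)
    (hc : π * Real.sqrt ((1 + ε) / (2 * ε)) ≤ c) :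
    Real.sin (π / c) ≤ (1 + ε) * (π / c) * Real.cos (π / c) := by
  have hs : (1 : ℝ) ≤ (1 + ε) / (2 * ε) := by
    rw [le_div_iff₀ (by linarith)]; linarith
  have hsqrt : (1 : ℝ) ≤ Real.sqrt ((1 + ε) / (2 * ε)) := by
    calc (1:ℝ) = Real.sqrt 1 := by simp
    _ ≤ _ := Real.sqrt_le_sqrt hs
  have hπ := Real.pi_pos
  have hc0 : 0 < c := lt_of_lt_of_le (by nlinarith) hc
  set x := π / c with hx
  have hx0 : 0 < x := div_pos hπ hc0
  -- x^2 ≤ 2ε/(1+ε)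
  have hx2 : x ^ 2 * (1 + ε) ≤ 2 * ε := by
    have h1 : π ≤ c / Real.sqrt ((1 + ε) / (2 * ε)) := by
      rw [le_div_iff₀ (by linarith)]
      linarith [hc]
    have hxle : x ≤ 1 / Real.sqrt ((1 + ε) / (2 * ε)) := by
      rw [hx, div_le_div_iff₀ hc0 (by linarith)]
      nlinarith
    have hsq : x ^ 2 ≤ (1 / Real.sqrt ((1 + ε) / (2 * ε))) ^ 2 := by
      have := sq_nonneg x
      nlinarith [hx0.le]
    have hval : (1 / Real.sqrt ((1 + ε) / (2 * ε))) ^ 2 = 2 * ε / (1 + ε) := by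
      rw [div_pow, one_pow, Real.sq_sqrt (by positivity)]
      rw [one_div_div]
    rw [hval] at hsq
    rw [← le_div_iff₀ (by linarith)]
    exact hsq
  have hsin : Real.sin x ≤ x := Real.sin_le hx0.le
  have hcos : 1 - x ^ 2 / 2 ≤ Real.cos x := Real.one_sub_sq_div_two_le_cos
  nlinarith [hx0, hcos, hsin, mul_pos hx0 hε0]
end
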